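/- arXiv:2305.19042 — 8 statements merged into one kernel-verified Lean document; each statement's English description precedes it below -/
import Mathlib

section
/- For any ideal I of a pre-L-algebra X, the relation ∼_I defined by x ∼_I y iff x·y ∈ I and y·x ∈ I is a congruence on X. -/
/-!
The argument rests on the cyclic law `(x·y)·(x·z) = (y·x)·(y·z)`: an ideal is closed
under left multiplication, so `y·z ∈ I` gives `(x·y)·(x·z) ∈ I`. With modus ponens this yields
transitivity of `x·y ∈ I` and compatibility of `∼_I` in the right argument; compatibility in
the left argument additionally uses the closure rules `(x·y)·y ∈ I` and `y·(x·y) ∈ I`.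
-/

class PreLAlgebra (X : Type*) extends Mul X, One X where
  mul_self : ∀ x : X, x * x = 1
  mul_unit : ∀ x : X, x * 1 = 1
  unit_mul : ∀ x : X, 1 * x = x
  cycl : ∀ x y z : X, (x * y) * (x * z) = (y * x) * (y * z)

class LAlgebra (X : Type*) extends PreLAlgebra X where
  antisymm : ∀ x y : X, x * y = 1 → y * x = 1 → x = y

def IsIdeal {X : Type*} [PreLAlgebra X] (I : Set X) : Prop :=
  (1 : X) ∈ I ∧
  (∀ x y : X, x ∈ I → x * y ∈ I → y ∈ I) ∧
  (∀ x y : X, x ∈ I → (x * y) * y ∈ I) ∧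
  (∀ x y : X, x ∈ I → y * x ∈ I) ∧
  (∀ x y : X, x ∈ I → y * (x * y) ∈ I)

def IsCongruence {X : Type*} [PreLAlgebra X] (r : X → X → Prop) : Prop :=
  Equivalence r ∧ ∀ x x' y y' : X, r x x' → r y y' → r (x * y) (x' * y')

def idealRel {X : Type*} [PreLAlgebra X] (I : Set X) (x y : X) : Prop :=
  x * y ∈ I ∧ y * x ∈ I

namespace IsIdeal

variable {X : Type*} [PreLAlgebra X] {I : Set X}

theorem one_mem (hI : IsIdeal I) : (1 : X) ∈ I := hI.1

theorem mem_of_mem_of_mul_mem (hI : IsIdeal I) {x y : X} (hx : x ∈ I) (hxy : x * y ∈ I) :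
    y ∈ I :=
  hI.2.1 x y hx hxy

theorem mul_mul_self_mem (hI : IsIdeal I) {x : X} (hx : x ∈ I) (y : X) : x * y * y ∈ I :=
  hI.2.2.1 x y hx

theorem mul_mem_left (hI : IsIdeal I) (y : X) {x : X} (hx : x ∈ I) : y * x ∈ I :=
  hI.2.2.2.1 x y hx

theorem mul_mul_mem_left (hI : IsIdeal I) (y : X) {x : X} (hx : x ∈ I) : y * (x * y) ∈ I :=
  hI.2.2.2.2 x y hx

theorem mul_mul_mem_of_mul_mem (hI : IsIdeal I) (x : X) {y z : X} (hyz : y * z ∈ I) :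
    x * y * (x * z) ∈ I := by
  rw [PreLAlgebra.cycl]
  exact hI.mul_mem_left _ hyz

theorem mul_mem_trans (hI : IsIdeal I) {x y z : X} (hxy : x * y ∈ I) (hyz : y * z ∈ I) :
    x * z ∈ I :=
  hI.mem_of_mem_of_mul_mem hxy (hI.mul_mul_mem_of_mul_mem x hyz)

theorem mul_mem_of_mul_mul_mem (hI : IsIdeal I) {a x y : X} (ha : a ∈ I)
    (h : a * x * y ∈ I) : x * y ∈ I :=
  hI.mem_of_mem_of_mul_mem (hI.mul_mul_mem_left x ha) (hI.mul_mul_mem_of_mul_mem x h)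

theorem mul_mul_mem_of_idealRel (hI : IsIdeal I) {x x' : X} (hx : idealRel I x x') (y : X) :
    x * y * (x' * y) ∈ I := by
  refine hI.mul_mem_of_mul_mul_mem hx.1 ?_
  rw [PreLAlgebra.cycl]
  exact hI.mul_mul_self_mem hx.2 (x' * y)

theorem idealRel_equivalence (hI : IsIdeal I) : Equivalence (idealRel I) where
  refl x := by simpa only [idealRel, PreLAlgebra.mul_self, and_self] using hI.one_mem
  symm h := h.symm
  trans hxy hyz := ⟨hI.mul_mem_trans hxy.1 hyz.1, hI.mul_mem_trans hyz.2 hxy.2⟩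

theorem idealRel_mul (hI : IsIdeal I) {x x' y y' : X} (hx : idealRel I x x')
    (hy : idealRel I y y') : idealRel I (x * y) (x' * y') :=
  ⟨hI.mul_mem_trans (hI.mul_mul_mem_of_idealRel hx y) (hI.mul_mul_mem_of_mul_mem x' hy.1),
    hI.mul_mem_trans (hI.mul_mul_mem_of_idealRel (hI.idealRel_equivalence.symm hx) y')
      (hI.mul_mul_mem_of_mul_mem x hy.2)⟩

end IsIdeal

theorem ideal_gives_congruence {X : Type*} [PreLAlgebra X]
    (I : Set X) (hI : IsIdeal I) :
    IsCongruence (fun x y => x * y ∈ I ∧ y * x ∈ I) :=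
  ⟨hI.idealRel_equivalence, fun _ _ _ _ => hI.idealRel_mul⟩
end

section
/- Let X be a pre-L-algebra, ∼ a congruence on X, and I an ideal of X. Then the class [1]_∼ is contained in I if and only if ∼ is contained in the congruence ∼_I (where x ∼_I y iff x·y ∈ I and y·x ∈ I). That is, the maps ∼ ↦ [1]_∼ and I ↦ ∼_I form a monotone Galois connection between congruences and ideals. -/
theorem IsCongruence.mul_rel_one {X : Type*} [PreLAlgebra X] {r : X → X → Prop}
    (hr : IsCongruence r) {x y : X} (h : r x y) : r (x * y) 1 := by
  simpa only [PreLAlgebra.mul_self] using hr.2 x y y y h (hr.1.refl y)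

theorem galois_connection_general {X : Type*} [PreLAlgebra X]
    (r : X → X → Prop) (hr : IsCongruence r)
    (I : Set X) :
    {x : X | r x 1} ⊆ I ↔ ∀ x y : X, r x y → (x * y ∈ I ∧ y * x ∈ I) := by
  constructor
  · intro hsub x y hxy
    exact ⟨hsub (hr.mul_rel_one hxy), hsub (hr.mul_rel_one (hr.1.symm hxy))⟩
  · intro h x hx
    simpa only [PreLAlgebra.unit_mul] using (h x 1 hx).2

theorem galois_connection {X : Type*} [PreLAlgebra X]
    (r : X → X → Prop) (hr : IsCongruence r)
    (I : Set X) (hI : IsIdeal I) :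
    {x : X | r x 1} ⊆ I ↔ ∀ x y : X, r x y → (x * y ∈ I ∧ y * x ∈ I) :=
  galois_connection_general r hr I
end

section
/- Let ∼ be a congruence on a pre-L-algebra X such that X/∼ is an L-algebra, and let I = [1]_∼. Then ∼ equals ∼_I, i.e., x ∼ y if and only if x·y ∈ I and y·x ∈ I. -/
theorem congruence_eq_ideal_congruence {X : Type*} [PreLAlgebra X]
    (r : X → X → Prop) (hr : IsCongruence r)
    (hL : ∀ x y : X, r (x * y) 1 → r (y * x) 1 → r x y) :
    ∀ x y : X, r x y ↔ (x * y ∈ {z : X | r z 1} ∧ y * x ∈ {z : X | r z 1}) :=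
  fun x y => ⟨fun h => ⟨hr.mul_rel_one h, hr.mul_rel_one (hr.1.symm h)⟩,
    fun h => hL x y h.1 h.2⟩
end

section
/- On any pre-L-algebra X, the relation x ∼ y defined by x·y = 1 and y·x = 1 is a congruence, and the quotient X/∼ is an L-algebra (this gives the L-algebra reflection of X). -/
/-! The relation `x * y = 1` is a preorder: transitivity is the cycloid law read at
`x * y = 1`. The same law shows that `y * z = 1` forces `(x * y) * (x * z) = 1` and that mutually
related elements act identically from the left, so the symmetrised relation is a congruence.
The class of `1` is `{1}`, which is why the quotient satisfies antisymmetry. -/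

namespace PreLAlgebra

variable {X : Type*} [PreLAlgebra X]

theorem mul_eq_one_trans {x y z : X} (hxy : x * y = 1) (hyz : y * z = 1) : x * z = 1 := by
  simpa only [hxy, hyz, unit_mul, mul_unit] using cycl x y z

theorem mul_mul_mul_eq_one_of_mul_eq_one (x : X) {y z : X} (hyz : y * z = 1) :
    (x * y) * (x * z) = 1 := by
  simpa only [hyz, mul_unit] using cycl x y z

theorem mul_eq_mul_of_mul_eq_one {x x' : X} (y : X) (hxx' : x * x' = 1) (hx'x : x' * x = 1) :
    x * y = x' * y := by
  simpa only [hxx', hx'x, unit_mul] using cycl x x' y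

theorem isCongruence_mutual_mul_eq_one :
    IsCongruence (fun x y : X => x * y = 1 ∧ y * x = 1) := by
  refine ⟨⟨fun x => ⟨mul_self x, mul_self x⟩, fun h => ⟨h.2, h.1⟩,
    fun h₁ h₂ => ⟨mul_eq_one_trans h₁.1 h₂.1, mul_eq_one_trans h₂.2 h₁.2⟩⟩, ?_⟩
  intro x x' y y' hx hy
  rw [mul_eq_mul_of_mul_eq_one y hx.1 hx.2]
  exact ⟨mul_mul_mul_eq_one_of_mul_eq_one x' hy.1, mul_mul_mul_eq_one_of_mul_eq_one x' hy.2⟩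

theorem mul_unit_eq_one_and_unit_mul_eq_one_iff {a : X} : (a * 1 = 1 ∧ 1 * a = 1) ↔ a = 1 := by
  rw [mul_unit, unit_mul, and_iff_right rfl]

end PreLAlgebra

open PreLAlgebra in
theorem lalgebra_reflection {X : Type*} [PreLAlgebra X] :
    IsCongruence (fun x y : X => x * y = 1 ∧ y * x = 1) ∧
    (∀ x y : X,
      ((x * y) * 1 = 1 ∧ 1 * (x * y) = 1) →
      ((y * x) * 1 = 1 ∧ 1 * (y * x) = 1) →
      (x * y = 1 ∧ y * x = 1)) :=
  ⟨isCongruence_mutual_mul_eq_one, fun _ _ hxy hyx =>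
    ⟨mul_unit_eq_one_and_unit_mul_eq_one_iff.1 hxy,
      mul_unit_eq_one_and_unit_mul_eq_one_iff.1 hyx⟩⟩
end

section
/- The class of L-algebras is not closed under homomorphic images: there exists an L-algebra X with 4 elements, a magma Y with 3 elements satisfying the pre-L-algebra axioms but not the L-algebra axiom, and a surjective map f : X → Y with f(u·v) = f(u)·f(v) for all u,v. Concretely, take X = {x,y,z,1} with x·x=1, x·y=y, x·z=z, x·1=1, y·x=1, y·y=1, y·z=x, y·1=1, z·x=1, z·y=x, z·z=1, z·1=1, 1·x=x, 1·y=y, 1·z=z, 1·1=1, and Y = {a,b,1} with a·a=a·b=a·1=b·a=b·b=b·1=1, 1·a=a, 1·b=b, 1·1=1, and f(x)=f(1)=1, f(y)=a, f(z)=b. -/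
/-!
Collapsing `x` to `1` in the four-element L-algebra `{x, y, z, 1}` is compatible with the
multiplication, so it yields a three-element pre-L-algebra `{a, b, 1}`. In the source,
`y` and `z` are separated because `y · z = x ≠ 1`; in the image this product becomes `1`,
so `a · b = b · a = 1` although `a ≠ b`.
-/

structure IsPreLAlgebra (α : Type*) [Mul α] [One α] : Prop where
  mul_self : ∀ x : α, x * x = 1
  mul_one : ∀ x : α, x * 1 = 1
  one_mul : ∀ x : α, 1 * x = x
  cycloid : ∀ x y z : α, (x * y) * (x * z) = (y * x) * (y * z)

structure IsLAlgebra (α : Type*) [Mul α] [One α] : Prop extends IsPreLAlgebra α where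
  eq_of_mul_eq_one : ∀ x y : α, x * y = 1 → y * x = 1 → x = y

inductive X4
  | x | y | z | one
  deriving DecidableEq

inductive Y3
  | a | b | one
  deriving DecidableEq

namespace X4

instance : Fintype X4 := ⟨{x, y, z, one}, fun u => by cases u <;> decide⟩

instance : One X4 := ⟨one⟩

instance : Mul X4 where
  mul
    | one, u => u
    | x, y => y
    | x, z => z
    | y, z => x
    | z, y => x
    | _, _ => one

theorem isLAlgebra : IsLAlgebra X4 where
  mul_self := by decide
  mul_one := by decide
  one_mul := by decide
  cycloid := by decide
  eq_of_mul_eq_one := by decide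

end X4

namespace Y3

instance : Fintype Y3 := ⟨{a, b, one}, fun u => by cases u <;> decide⟩

instance : One Y3 := ⟨one⟩

instance : Mul Y3 where
  mul
    | one, u => u
    | _, _ => one

theorem isPreLAlgebra : IsPreLAlgebra Y3 where
  mul_self := by decide
  mul_one := by decide
  one_mul := by decide
  cycloid := by decide

theorem not_isLAlgebra : ¬ IsLAlgebra Y3 :=
  fun h => absurd (h.eq_of_mul_eq_one a b rfl rfl) (by decide)

end Y3

namespace X4

def toY3 : X4 → Y3
  | x => .one
  | y => .a
  | z => .b
  | one => .one

theorem toY3_surjective : Function.Surjective toY3 := by decide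

theorem toY3_mul (u v : X4) : toY3 (u * v) = toY3 u * toY3 v := by
  revert u v; decide

end X4

theorem lalgebras_not_closed_under_images :
    ∃ (X Y : Type) (_ : Mul X) (_ : One X) (_ : Mul Y) (_ : One Y) (f : X → Y),
      Nat.card X = 4 ∧ Nat.card Y = 3 ∧
      (∀ x : X, x * x = 1) ∧ (∀ x : X, x * 1 = 1) ∧ (∀ x : X, 1 * x = x) ∧
      (∀ x y z : X, (x * y) * (x * z) = (y * x) * (y * z)) ∧
      (∀ x y : X, x * y = 1 → y * x = 1 → x = y) ∧
      (∀ y : Y, y * y = 1) ∧ (∀ y : Y, y * 1 = 1) ∧ (∀ y : Y, 1 * y = y) ∧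
      (∀ a b c : Y, (a * b) * (a * c) = (b * a) * (b * c)) ∧
      ¬ (∀ a b : Y, a * b = 1 → b * a = 1 → a = b) ∧
      Function.Surjective f ∧
      (∀ u v : X, f (u * v) = f u * f v) := by
  have hX := X4.isLAlgebra
  have hY := Y3.isPreLAlgebra
  refine ⟨X4, Y3, inferInstance, inferInstance, inferInstance, inferInstance, X4.toY3,
    by rw [Nat.card_eq_fintype_card]; rfl, by rw [Nat.card_eq_fintype_card]; rfl,
    hX.mul_self, hX.mul_one, hX.one_mul, hX.cycloid, hX.eq_of_mul_eq_one,
    hY.mul_self, hY.mul_one, hY.one_mul, hY.cycloid,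
    fun h => Y3.not_isLAlgebra ⟨hY, h⟩, X4.toY3_surjective, X4.toY3_mul⟩
end

section
/- There exists an L-algebra X (the two-element L-algebra {0,1} with 0·0 = 0·1 = 1·1 = 1 and 1·0 = 0) and a subalgebra R = {(0,1),(1,0),(1,1)} of X × X whose two projection kernel congruences Eq(p₁) and Eq(p₂) do not permute: ((1,0),(0,1)) ∈ Eq(p₂)∘Eq(p₁) but ((1,0),(0,1)) ∉ Eq(p₁)∘Eq(p₂). Hence the quasivariety of L-algebras is not congruence-permutable (not Mal'tsev). -/
/-- The two-element L-algebra on `Bool`, with `1 = true`, `0 = false`: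
`0·0 = 0·1 = 1·1 = 1` and `1·0 = 0`. -/
def bmul (a b : Bool) : Bool := !a || b

/-- Componentwise multiplication on pairs. -/
def pmul (p q : Bool × Bool) : Bool × Bool := (bmul p.1 q.1, bmul p.2 q.2)

/-- The subalgebra `R = {(0,1),(1,0),(1,1)}` of `X × X`. -/
def R : Set (Bool × Bool) := {(false, true), (true, false), (true, true)}

/-- The kernel congruence of the first projection `p₁ : R → X`. -/
def E1 (p q : Bool × Bool) : Prop := p ∈ R ∧ q ∈ R ∧ p.1 = q.1

/-- The kernel congruence of the second projection `p₂ : R → X`. -/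
def E2 (p q : Bool × Bool) : Prop := p ∈ R ∧ q ∈ R ∧ p.2 = q.2

/-!
`R` is `X × X` with `(0,0)` removed. A product `p · q` can only be `(0,0)` if `q = (0,0)`,
so `R` is a subalgebra. The element `(1,1)` links `(1,0)` to `(0,1)` through `Eq(p₁)` and then
`Eq(p₂)`; linking them the other way round would need an element of `R` with both coordinates
`0`, namely `(0,0)`.
-/

theorem mem_R_iff {p : Bool × Bool} : p ∈ R ↔ (p.1 || p.2) = true := by
  obtain ⟨a, b⟩ := p
  cases a <;> cases b <;> simp [R]

theorem pmul_mem_R {p q : Bool × Bool} (hp : p ∈ R) (hq : q ∈ R) : pmul p q ∈ R := by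
  rw [mem_R_iff] at hp hq ⊢
  revert p q
  decide

theorem not_exists_E2_E1 : ¬ ∃ m, E2 (true, false) m ∧ E1 m (false, true) := by
  rintro ⟨m, ⟨-, hm, h₂⟩, -, -, h₁⟩
  have hm_zero : m = (false, false) := Prod.ext h₁ h₂.symm
  simp [hm_zero, mem_R_iff] at hm

theorem lalg_not_maltsev :
    (∀ a : Bool, bmul a a = true) ∧
    (∀ a : Bool, bmul a true = true) ∧
    (∀ a : Bool, bmul true a = a) ∧
    (∀ a b c : Bool, bmul (bmul a b) (bmul a c) = bmul (bmul b a) (bmul b c)) ∧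
    (∀ a b : Bool, bmul a b = true → bmul b a = true → a = b) ∧
    (∀ p q : Bool × Bool, p ∈ R → q ∈ R → pmul p q ∈ R) ∧
    (∃ m : Bool × Bool, E1 (true, false) m ∧ E2 m (false, true)) ∧
    ¬ (∃ m : Bool × Bool, E2 (true, false) m ∧ E1 m (false, true)) :=
  ⟨by decide, by decide, by decide, by decide, by decide, fun _ _ => pmul_mem_R,
    ⟨(true, true), by simp [E1, E2, R]⟩, not_exists_E2_E1⟩
end

section
/- The variety of pre-L-algebras is permutable at 1: for any two congruences R and S on a pre-L-algebra X and any x ∈ X, if there exists y with x R y and y S 1, then there exists z with x S z and z R 1. -/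
namespace IsCongruence

variable {X : Type*} [PreLAlgebra X] {r : X → X → Prop}

theorem mul_left (hr : IsCongruence r) (x : X) {y y' : X} (h : r y y') : r (x * y) (x * y') :=
  hr.2 _ _ _ _ (hr.1.refl x) h

theorem mul_right (hr : IsCongruence r) {y y' : X} (h : r y y') (x : X) : r (y * x) (y' * x) :=
  hr.2 _ _ _ _ h (hr.1.refl x)

theorem rel_mul_of_rel_one (hr : IsCongruence r) {y : X} (h : r y 1) (x : X) : r x (y * x) := by
  have h' := hr.mul_right h x
  rw [PreLAlgebra.unit_mul] at h'
  exact hr.1.symm h'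

theorem mul_rel_one_of_rel (hr : IsCongruence r) {x y : X} (h : r x y) : r (y * x) 1 := by
  simpa only [PreLAlgebra.mul_self] using hr.mul_left y h

end IsCongruence

theorem permutable_at_one {X : Type*} [PreLAlgebra X]
    (R S : X → X → Prop) (hR : IsCongruence R) (hS : IsCongruence S) (x : X)
    (h : ∃ y : X, R x y ∧ S y 1) :
    ∃ z : X, S x z ∧ R z 1 := by
  obtain ⟨y, hxy, hy1⟩ := h
  exact ⟨y * x, hS.rel_mul_of_rel_one hy1 x, hR.mul_rel_one_of_rel hxy⟩
end

section
/- Let X be an L-algebra and I, J ideals of X. If an ideal N of X has the property that the map μ : I × J → X/∼_N, μ(i,j) = [i·j], is an L-algebra morphism (i.e., [i·i']·[j·j'] = [(i·j)·(i'·j')] for all i,i' ∈ I, j,j' ∈ J), then I ∩ J ⊆ N. Consequently the commutator [I,J] (the smallest such ideal) equals I ∩ J. -/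
namespace IsIdeal

variable {X : Type*} [PreLAlgebra X] {N : Set X}

/-- The relation `∼_N`. -/
def Rel (N : Set X) (x y : X) : Prop :=
  x * y ∈ N ∧ y * x ∈ N

lemma mul_mem_trans_s19 (hN : IsIdeal N) {a b c : X} (hab : a * b ∈ N) (hbc : b * c ∈ N) :
    a * c ∈ N := by
  have : (a * b) * (a * c) ∈ N := by
    rw [PreLAlgebra.cycl]
    exact hN.2.2.2.1 _ _ hbc
  exact hN.2.1 _ _ hab this

lemma mul_mem_mul_left (hN : IsIdeal N) (x : X) {y y' : X} (h : y * y' ∈ N) :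
    (x * y) * (x * y') ∈ N := by
  rw [PreLAlgebra.cycl]
  exact hN.2.2.2.1 _ _ h

lemma mul_mem_mul_right (hN : IsIdeal N) {x x' : X} (y : X) (h : x * x' ∈ N)
    (h' : x' * x ∈ N) : (x * y) * (x' * y) ∈ N := by
  have hx : (x * y) * ((x * x') * (x * y)) ∈ N := hN.2.2.2.2 _ _ h
  have hx' : ((x' * x) * (x' * y)) * (x' * y) ∈ N := hN.2.2.1 _ _ h'
  rw [PreLAlgebra.cycl] at hx'
  exact hN.mul_mem_trans_s19 hx hx'

lemma equivalence_rel (hN : IsIdeal N) : Equivalence (Rel N) where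
  refl x := by
    rw [Rel, PreLAlgebra.mul_self]
    exact ⟨hN.1, hN.1⟩
  symm h := h.symm
  trans h h' := ⟨hN.mul_mem_trans_s19 h.1 h'.1, hN.mul_mem_trans_s19 h'.2 h.2⟩

lemma rel_mul (hN : IsIdeal N) {x x' y y' : X} (hx : Rel N x x') (hy : Rel N y y') :
    Rel N (x * y) (x' * y') :=
  (hN.equivalence_rel.trans
    ⟨hN.mul_mem_mul_right y hx.1 hx.2, hN.mul_mem_mul_right y hx.2 hx.1⟩
    ⟨hN.mul_mem_mul_left x' hy.1, hN.mul_mem_mul_left x' hy.2⟩)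

lemma rel_one (hN : IsIdeal N) {x : X} (hx : x ∈ N) : Rel N x 1 := by
  rw [Rel, PreLAlgebra.mul_unit, PreLAlgebra.unit_mul]
  exact ⟨hN.1, hx⟩

lemma inter {I J : Set X} (hI : IsIdeal I) (hJ : IsIdeal J) : IsIdeal (I ∩ J) :=
  ⟨⟨hI.1, hJ.1⟩,
    fun x y hx hxy => ⟨hI.2.1 x y hx.1 hxy.1, hJ.2.1 x y hx.2 hxy.2⟩,
    fun x y hx => ⟨hI.2.2.1 x y hx.1, hJ.2.2.1 x y hx.2⟩,
    fun x y hx => ⟨hI.2.2.2.1 x y hx.1, hJ.2.2.2.1 x y hx.2⟩,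
    fun x y hx => ⟨hI.2.2.2.2 x y hx.1, hJ.2.2.2.2 x y hx.2⟩⟩

lemma rel_interchange_of_mem_left {I : Set X} (hI : IsIdeal I) {i i' : X} (hi : i ∈ I)
    (hi' : i' ∈ I) (j j' : X) : Rel I ((i * i') * (j * j')) ((i * j) * (i' * j')) := by
  have h₁ : Rel I ((i * i') * (j * j')) (j * j') := by
    simpa only [PreLAlgebra.unit_mul] using
      hI.rel_mul (hI.rel_mul (hI.rel_one hi) (hI.rel_one hi')) (hI.equivalence_rel.refl (j * j'))
  have h₂ : Rel I ((i * j) * (i' * j')) (j * j') := by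
    simpa only [PreLAlgebra.unit_mul] using
      hI.rel_mul (hI.rel_mul (hI.rel_one hi) (hI.equivalence_rel.refl j))
        (hI.rel_mul (hI.rel_one hi') (hI.equivalence_rel.refl j'))
  exact hI.equivalence_rel.trans h₁ (hI.equivalence_rel.symm h₂)

lemma rel_interchange_of_mem_right {J : Set X} (hJ : IsIdeal J) (i i' : X) {j j' : X}
    (hj : j ∈ J) (hj' : j' ∈ J) : Rel J ((i * i') * (j * j')) ((i * j) * (i' * j')) := by
  have h₁ : Rel J ((i * i') * (j * j')) 1 := by
    simpa only [PreLAlgebra.unit_mul, PreLAlgebra.mul_unit] using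
      hJ.rel_mul (hJ.equivalence_rel.refl (i * i')) (hJ.rel_mul (hJ.rel_one hj) (hJ.rel_one hj'))
  have h₂ : Rel J ((i * j) * (i' * j')) 1 := by
    simpa only [PreLAlgebra.unit_mul, PreLAlgebra.mul_unit] using
      hJ.rel_mul (hJ.rel_mul (hJ.equivalence_rel.refl i) (hJ.rel_one hj))
        (hJ.rel_mul (hJ.equivalence_rel.refl i') (hJ.rel_one hj'))
  exact hJ.equivalence_rel.trans h₁ (hJ.equivalence_rel.symm h₂)

end IsIdeal

lemma PreLAlgebra.inter_subset_of_interchange {X : Type*} [PreLAlgebra X] {I J N : Set X}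
    (hI : (1 : X) ∈ I)
    (h : ∀ i ∈ I, ∀ i' ∈ I, ∀ j ∈ J, ∀ j' ∈ J, ((i * i') * (j * j')) * ((i * j) * (i' * j')) ∈ N) :
    I ∩ J ⊆ N := by
  intro x ⟨hxI, hxJ⟩
  simpa only [PreLAlgebra.mul_self, PreLAlgebra.mul_unit, PreLAlgebra.unit_mul] using
    h x hxI 1 hI x hxJ x hxJ

theorem commutator_eq_inter {X : Type*} [LAlgebra X]
    (I J : Set X) (hI : IsIdeal I) (hJ : IsIdeal J) :
    (∀ N : Set X, IsIdeal N →
      (∀ i ∈ I, ∀ i' ∈ I, ∀ j ∈ J, ∀ j' ∈ J,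
        ((i * i') * (j * j')) * ((i * j) * (i' * j')) ∈ N ∧
        ((i * j) * (i' * j')) * ((i * i') * (j * j')) ∈ N) →
      I ∩ J ⊆ N) ∧
    IsIdeal (I ∩ J) ∧
    (∀ i ∈ I, ∀ i' ∈ I, ∀ j ∈ J, ∀ j' ∈ J,
      ((i * i') * (j * j')) * ((i * j) * (i' * j')) ∈ I ∩ J ∧
      ((i * j) * (i' * j')) * ((i * i') * (j * j')) ∈ I ∩ J) := by
  refine ⟨fun N _ hN ↦ ?_, hI.inter hJ, ?_⟩
  · exact PreLAlgebra.inter_subset_of_interchange hI.1 fun i hi i' hi' j hj j' hj' ↦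
      (hN i hi i' hi' j hj j' hj').1
  · intro i hi i' hi' j hj j' hj'
    have hIrel := hI.rel_interchange_of_mem_left hi hi' j j'
    have hJrel := hJ.rel_interchange_of_mem_right i i' hj hj'
    exact ⟨⟨hIrel.1, hJrel.1⟩, ⟨hIrel.2, hJrel.2⟩⟩
end
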